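/- The projection of the affine cone over the twisted cubic onto its last three coordinates is exactly the surface V(x·z² − y³) ⊆ ℂ³: for all x, y, z ∈ ℂ, there exists u ∈ ℂ with u² = x·y, u·y = x·z, and u·z = y² if and only if x·z² = y³. -/

import Mathlib

/-! Every point of the cone satisfies `x z² = (u y) z = (u z) y = y³`. Conversely, on the surface
`x z² = y³` with `z ≠ 0` the point `u = y² / z` lifts, and `z = 0` forces `y = 0`, where `u = 0`
lifts. -/

theorem mul_sq_eq_pow_three_of_mul_eq {R : Type*} [CommRing R] {u x y z : R}
    (huy : u * y = x * z) (huz : u * z = y ^ 2) : x * z ^ 2 = y ^ 3 :=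
  calc x * z ^ 2 = u * y * z := by rw [huy]; ring
    _ = u * z * y := by ring
    _ = y ^ 3 := by rw [huz]; ring

section Field

variable {K : Type*} [Field K] {x y z : K}

theorem exists_cone_lift_of_ne_zero (h : x * z ^ 2 = y ^ 3) (hz : z ≠ 0) :
    ∃ u : K, u ^ 2 = x * y ∧ u * y = x * z ∧ u * z = y ^ 2 := by
  refine ⟨y ^ 2 / z, ?_, ?_, ?_⟩ <;> field_simp
  · linear_combination -y * h
  · linear_combination -h

theorem exists_cone_lift_of_eq_zero (h : x * z ^ 2 = y ^ 3) (hz : z = 0) :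
    ∃ u : K, u ^ 2 = x * y ∧ u * y = x * z ∧ u * z = y ^ 2 := by
  subst hz
  have hy : y = 0 := pow_eq_zero_iff three_ne_zero |>.mp (by rw [← h]; ring)
  exact ⟨0, by simp [hy]⟩

theorem exists_cone_lift (h : x * z ^ 2 = y ^ 3) :
    ∃ u : K, u ^ 2 = x * y ∧ u * y = x * z ∧ u * z = y ^ 2 := by
  by_cases hz : z = 0
  · exact exists_cone_lift_of_eq_zero h hz
  · exact exists_cone_lift_of_ne_zero h hz

end Field

/-- The projection of the affine cone over the twisted cubic onto its last three
coordinates is exactly V(x·z² − y³). -/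
theorem twisted_cubic_cone_projection :
    ∀ x y z : ℂ,
      (∃ u : ℂ, u ^ 2 = x * y ∧ u * y = x * z ∧ u * z = y ^ 2) ↔
      x * z ^ 2 = y ^ 3 := fun _ _ _ =>
  ⟨fun ⟨_, _, huy, huz⟩ => mul_sq_eq_pow_three_of_mul_eq huy huz, exists_cone_lift⟩
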